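/- For all a > 0, x > 0, and real y, the integral over t in (-∞, ∞) of sin(a t) / (x² + (y - t)²) dt equals (π / x) · e^{-a x} · sin(a y). -/

import Mathlib

/-!
The two-sided exponential `t ↦ exp (-x |t|)` has Fourier transform `2x / (x² + (2πξ)²)`,
computed by splitting the line at `0`. Both functions are integrable, so Fourier inversion
evaluates `∫ exp (i v t) / (x² + t²) dt = (π / x) exp (-x |v|)`. The substitution `t ↦ y - t`
turns this into the integral against the shifted kernel, and the claim is its imaginary part
at `v = a > 0`.
-/

open Real MeasureTheory Set FourierTransform Complex

lemma integrable_exp_neg_mul_abs {x : ℝ} (hx : 0 < x) :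
    Integrable fun t : ℝ => rexp (-x * |t|) := by
  rw [← integrableOn_univ, ← Iic_union_Ioi (a := 0), integrableOn_union]
  constructor
  · refine (integrableOn_exp_mul_Iic hx 0).congr_fun (fun t ht => ?_) measurableSet_Iic
    rw [abs_of_nonpos ht, neg_mul_neg]
  · refine (integrableOn_exp_mul_Ioi (neg_neg_of_pos hx) 0).congr_fun (fun t ht => ?_)
      measurableSet_Ioi
    rw [abs_of_pos ht]

lemma integrable_inv_sq_add_sq {x : ℝ} (hx : x ≠ 0) :
    Integrable fun t : ℝ => (x ^ 2 + t ^ 2)⁻¹ := by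
  refine ((integrable_inv_one_add_sq.comp_div hx).const_mul (x ^ 2)⁻¹).congr
    (.of_forall fun t => ?_)
  field_simp

lemma fourier_exp_neg_mul_abs {x : ℝ} (hx : 0 < x) (ξ : ℝ) :
    𝓕 (fun t : ℝ => (rexp (-x * |t|) : ℂ)) ξ = 2 * x / (x ^ 2 + (2 * π * ξ) ^ 2) := by
  rw [Real.fourier_real_eq_integral_exp_smul]
  have hleft : EqOn (fun t : ℝ => cexp (↑(-2 * π * t * ξ) * I) • (rexp (-x * |t|) : ℂ))
      (fun t : ℝ => cexp ((x - 2 * π * ξ * I) * t)) (Iic 0) := fun t ht => by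
    dsimp only
    rw [smul_eq_mul, abs_of_nonpos ht, ofReal_exp, ← Complex.exp_add]
    congr 1; push_cast; ring
  have hright : EqOn (fun t : ℝ => cexp (↑(-2 * π * t * ξ) * I) • (rexp (-x * |t|) : ℂ))
      (fun t : ℝ => cexp ((-x - 2 * π * ξ * I) * t)) (Ioi 0) := fun t ht => by
    dsimp only
    rw [smul_eq_mul, abs_of_pos ht, ofReal_exp, ← Complex.exp_add]
    congr 1; push_cast; ring
  have hre₁ : 0 < ((x : ℂ) - 2 * π * ξ * I).re := by simp [hx]
  have hre₂ : ((-x : ℂ) - 2 * π * ξ * I).re < 0 := by simp [hx]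
  rw [← intervalIntegral.integral_Iic_add_Ioi
      ((integrableOn_exp_mul_complex_Iic hre₁ 0).congr_fun hleft.symm measurableSet_Iic)
      ((integrableOn_exp_mul_complex_Ioi hre₂ 0).congr_fun hright.symm measurableSet_Ioi),
    setIntegral_congr_fun measurableSet_Iic hleft, setIntegral_congr_fun measurableSet_Ioi hright,
    integral_exp_mul_complex_Iic hre₁, integral_exp_mul_complex_Ioi hre₂]
  have h₁ : (x : ℂ) - 2 * π * ξ * I ≠ 0 := fun h => by simp [h] at hre₁
  have h₂ : (-x : ℂ) - 2 * π * ξ * I ≠ 0 := fun h => by simp [h] at hre₂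
  have h₃ : (x : ℂ) ^ 2 + (2 * π * ξ) ^ 2 ≠ 0 := by
    exact_mod_cast (by positivity : x ^ 2 + (2 * π * ξ) ^ 2 ≠ 0)
  simp only [ofReal_zero, mul_zero, Complex.exp_zero]
  rw [div_add_div _ _ h₁ h₂, div_eq_div_iff (mul_ne_zero h₁ h₂) h₃]
  linear_combination (-8 * x * π ^ 2 * ξ ^ 2 : ℂ) * I_sq

lemma integral_cexp_mul_I_div_sq_add_sq {x : ℝ} (hx : 0 < x) (v : ℝ) :
    ∫ t : ℝ, cexp (v * t * I) / (x ^ 2 + t ^ 2) = π / x * rexp (-x * |v|) := by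
  set G : ℝ → ℂ := fun u => cexp (v * u * I) / (x ^ 2 + u ^ 2)
  set f : ℝ → ℂ := fun t => rexp (-x * |t|)
  have hf : Integrable f := (integrable_exp_neg_mul_abs hx).ofReal
  have hf_cont : Continuous f := by fun_prop
  have hFf : 𝓕 f = fun ξ : ℝ => (2 * x / (x ^ 2 + (2 * π * ξ) ^ 2) : ℂ) :=
    funext (fourier_exp_neg_mul_abs hx)
  have hFf_int : Integrable (𝓕 f) := by
    have hπ : 2 * π ≠ 0 := by positivity
    refine (((integrable_inv_sq_add_sq hx.ne').comp_mul_left' hπ).const_mul (2 * x)).ofReal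
      |>.congr (.of_forall fun ξ => ?_)
    rw [hFf]
    push_cast
    rfl
  have hinv := hf.fourierInv_fourier_eq hFf_int (hf_cont.continuousAt (x := v))
  rw [hFf, fourierInv_eq_fourier_neg, Real.fourier_real_eq_integral_exp_smul] at hinv
  have hintegrand : ∀ ξ : ℝ,
      cexp (↑(-2 * π * ξ * -v) * I) • (2 * x / (x ^ 2 + (2 * π * ξ) ^ 2) : ℂ)
        = 2 * x * G (2 * π * ξ) := by
    intro ξ
    simp only [G]
    push_cast
    ring_nf
  rw [integral_congr_ae (.of_forall hintegrand), integral_const_mul,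
    Measure.integral_comp_mul_left G, abs_of_pos (by positivity), Complex.real_smul] at hinv
  have hx' : (x : ℂ) ≠ 0 := by exact_mod_cast hx.ne'
  have hπ' : (π : ℂ) ≠ 0 := by exact_mod_cast pi_ne_zero
  change ∫ u, G u = π / x * f v
  rw [← hinv]
  push_cast
  field_simp

lemma integrable_cexp_mul_I_div_sq_add_sub_sq {x : ℝ} (hx : x ≠ 0) (v y : ℝ) :
    Integrable fun t : ℝ => cexp (v * t * I) / (x ^ 2 + (y - t) ^ 2) := by
  have h := ((integrable_inv_sq_add_sq hx).comp_sub_left y).ofReal.bdd_mul (c := 1)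
    (f := fun t : ℝ => cexp (v * t * I)) (by fun_prop) (.of_forall fun t => by
      rw [← ofReal_mul, norm_exp_ofReal_mul_I])
  refine h.congr (.of_forall fun t => ?_)
  simp only [div_eq_mul_inv]
  push_cast
  rfl

lemma integral_cexp_mul_I_div_sq_add_sub_sq {x : ℝ} (hx : 0 < x) (v y : ℝ) :
    ∫ t : ℝ, cexp (v * t * I) / (x ^ 2 + (y - t) ^ 2)
      = π / x * rexp (-x * |v|) * cexp (v * y * I) := by
  have hshift : ∀ t : ℝ, cexp (v * t * I) / (x ^ 2 + (y - t) ^ 2)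
      = cexp (v * y * I) * (fun u : ℝ => cexp (↑(-v) * u * I) / (x ^ 2 + u ^ 2)) (y - t) := by
    intro t
    rw [mul_div_assoc', ← Complex.exp_add]
    push_cast
    ring_nf
  rw [integral_congr_ae (.of_forall hshift), integral_const_mul,
    integral_sub_left_eq_self (fun u : ℝ => cexp (↑(-v) * u * I) / (x ^ 2 + u ^ 2)),
    integral_cexp_mul_I_div_sq_add_sq hx, abs_neg]
  ring

theorem poisson_sin (a x y : ℝ) (ha : 0 < a) (hx : 0 < x) :
    ∫ t : ℝ, Real.sin (a * t) / (x ^ 2 + (y - t) ^ 2)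
      = (Real.pi / x) * Real.exp (-a * x) * Real.sin (a * y) := by
  have him : ∀ t : ℝ, Real.sin (a * t) / (x ^ 2 + (y - t) ^ 2)
      = (cexp (a * t * I) / (x ^ 2 + (y - t) ^ 2)).im := by
    intro t
    rw [← ofReal_mul, ← exp_ofReal_mul_I_im]
    norm_cast
    rw [div_ofReal_im]
  simp_rw [him, ← RCLike.im_to_complex]
  rw [integral_im (integrable_cexp_mul_I_div_sq_add_sub_sq hx.ne' a y), RCLike.im_to_complex,
    integral_cexp_mul_I_div_sq_add_sub_sq hx, abs_of_pos ha]
  norm_cast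
  rw [im_ofReal_mul, exp_ofReal_mul_I_im, neg_mul, neg_mul, mul_comm x a]
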